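/- A tetrahedron is not equiprojective: there exist two directions, neither parallel to any face, such that the orthogonal projections of the tetrahedron along them are polygons with different numbers of vertices (a triangle and a quadrilateral). -/

import Mathlib

/-- A face of a convex polyhedron: a two-dimensional exposed face. -/
def IsFaceOf (P F : Set (EuclideanSpace ℝ (Fin 3))) : Prop :=
  IsExposed ℝ P F ∧ Module.finrank ℝ (vectorSpan ℝ F) = 2

noncomputable def shadow (P : Set (EuclideanSpace ℝ (Fin 3)))
    (d : EuclideanSpace ℝ (Fin 3)) : Set ((ℝ ∙ d)ᗮ : Submodule ℝ _) :=
  (Submodule.orthogonalProjection (ℝ ∙ d)ᗮ) '' P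

def IsKGon {V : Type*} [AddCommGroup V] [Module ℝ V] (k : ℕ) (A : Set V) : Prop :=
  (A.extremePoints ℝ).ncard = k

/-!
Write a direction as `d = ∑ i, c i • p i` with `∑ i, c i = 0`. If no `c i` vanishes, `d` is
parallel to no face: a face of the simplex is cut out by a functional `l` which takes one value
`M` on all vertices but one, `p m`, so `l d = c m * (l (p m) - M) ≠ 0`.

Projecting along `d`, the relation `∑ i, c i • π (p i) = 0` is, by affine independence of the
`p i`, the only affine relation among the projected vertices. Hence `π (p j)` lies in the hull of
the other projected vertices exactly when `c j` is the only coefficient of its sign. The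
coefficients `(1, 1, 1, -3)` therefore give a triangular shadow and `(1, 1, -1, -1)` a
quadrilateral one.
-/

section Convex

variable {E : Type*} [AddCommGroup E] [Module ℝ E]

theorem mem_extremePoints_convexHull_of_notMem {s : Set E} {x : E} (hx : x ∈ s)
    (hxs : x ∉ convexHull ℝ (s \ {x})) : x ∈ (convexHull ℝ s).extremePoints ℝ := by
  rw [← Set.insert_eq_of_mem hx, ← Set.insert_sdiff_singleton]
  set t := s \ {x}
  rcases t.eq_empty_or_nonempty with ht | ⟨y, hy⟩
  · simp [ht]
  simp only [convexHull_insert ⟨y, hy⟩, convexJoin_singleton_left, mem_extremePoints_iff_left,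
    Set.mem_iUnion₂]
  refine ⟨⟨y, subset_convexHull ℝ t hy, left_mem_segment ℝ x y⟩, ?_⟩
  rintro _ ⟨y₁, hy₁, α₁, β₁, -, hβ₁, hαβ₁, rfl⟩ _ ⟨y₂, hy₂, α₂, β₂, -, hβ₂, hαβ₂, rfl⟩
    ⟨a, b, ha, hb, hab, hx'⟩
  obtain rfl : α₁ = 1 - β₁ := by linarith
  obtain rfl : α₂ = 1 - β₂ := by linarith
  rcases hβ₁.eq_or_lt with rfl | hβ₁
  · simp
  have hs : 0 < a * β₁ + b * β₂ := by positivity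
  have hsx : (a * β₁ + b * β₂) • x = (a * β₁) • y₁ + (b * β₂) • y₂ := by
    linear_combination (norm := module) -hx' + hab • x
  refine absurd ?_ hxs
  convert convex_iff_div.1 (convex_convexHull ℝ t) hy₁ hy₂ (by positivity : 0 ≤ a * β₁)
    (by positivity : 0 ≤ b * β₂) hs using 1
  rw [← inv_smul_smul₀ hs.ne' x, hsx]
  module

theorem exists_weights_of_mem_convexHull_image {ι : Type*} [Fintype ι] (p : ι → E) (S : Set ι)
    {x : E} (hx : x ∈ convexHull ℝ (p '' S)) :
    ∃ w : ι → ℝ, (∀ i, 0 ≤ w i) ∧ (∀ i ∉ S, w i = 0) ∧ ∑ i, w i = 1 ∧ ∑ i, w i • p i = x := by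
  classical
  suffices h : convexHull ℝ (p '' S) ⊆
      {x | ∃ w : ι → ℝ, (∀ i, 0 ≤ w i) ∧ (∀ i ∉ S, w i = 0) ∧ ∑ i, w i = 1 ∧
        ∑ i, w i • p i = x} from h hx
  refine convexHull_min ?_ ?_
  · rintro _ ⟨i, hi, rfl⟩
    refine ⟨Pi.single i 1, fun k => ?_, fun k hk => ?_, by simp, by simp⟩
    · by_cases hk : k = i <;> simp [hk]
    · simp [show k ≠ i by rintro rfl; exact hk hi]
  · rintro _ ⟨w, hw0, hwS, hw1, rfl⟩ _ ⟨w', hw0', hwS', hw1', rfl⟩ a b ha hb hab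
    refine ⟨a • w + b • w', fun i => ?_, fun i hi => by simp [hwS i hi, hwS' i hi], ?_, ?_⟩
    · simp only [Pi.add_apply, Pi.smul_apply, smul_eq_mul]
      have := hw0 i
      have := hw0' i
      positivity
    · simp [Finset.sum_add_distrib, ← Finset.mul_sum, hw1, hw1', hab]
    · simp [add_smul, mul_smul, Finset.sum_add_distrib, Finset.smul_sum]

theorem ncard_extremePoints_convexHull_range {ι : Type*} (q : ι → E) (G : Finset ι)
    (hG : ∀ j ∈ G, q j ∉ convexHull ℝ (q '' {i | i ≠ j}))
    (hcov : Set.range q ⊆ convexHull ℝ (q '' G)) :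
    ((convexHull ℝ (Set.range q)).extremePoints ℝ).ncard = G.card := by
  have hhull : convexHull ℝ (Set.range q) = convexHull ℝ (q '' G) :=
    (convexHull_min hcov (convex_convexHull ℝ _)).antisymm
      (convexHull_mono (Set.image_subset_range q G))
  have hext : (convexHull ℝ (q '' G)).extremePoints ℝ = q '' G := by
    refine extremePoints_convexHull_subset.antisymm ?_
    rintro _ ⟨j, hj, rfl⟩
    refine mem_extremePoints_convexHull_of_notMem ⟨j, hj, rfl⟩ fun h => hG j hj ?_
    refine convexHull_mono ?_ h
    rintro _ ⟨⟨i, -, rfl⟩, hij⟩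
    exact ⟨i, fun h => hij (congrArg q h), rfl⟩
  have hinj : Set.InjOn q G := fun i _ j hj hij =>
    by_contra fun hne => hG j hj (subset_convexHull ℝ _ ⟨i, hne, hij⟩)
  rw [hhull, hext, hinj.ncard_image, Set.ncard_coe_finset]

theorem vectorSpan_convexHull (s : Set E) : vectorSpan ℝ (convexHull ℝ s) = vectorSpan ℝ s := by
  rw [← direction_affineSpan, affineSpan_convexHull, direction_affineSpan]

end Convex

section Simplex

variable {E W : Type*} [AddCommGroup E] [Module ℝ E] [AddCommGroup W] [Module ℝ W]
  {ι : Type*} [Fintype ι] {p : ι → E} {c : ι → ℝ}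

theorem apply_eq_zero_of_mem_vectorSpan {s : Set E} (l : E →ₗ[ℝ] W) {a : W}
    (hs : ∀ x ∈ s, l x = a) {v : E} (hv : v ∈ vectorSpan ℝ s) : l v = 0 := by
  refine (Submodule.span_le (p := LinearMap.ker l).2 ?_ hv : _)
  rintro _ ⟨x, hx, y, hy, rfl⟩
  simp [hs x hx, hs y hy]

theorem finrank_vectorSpan_lt_card_of_subset_convexHull (p : ι → E) (T : Finset ι) {F : Set E}
    (hFne : F.Nonempty) (hFT : F ⊆ convexHull ℝ (p '' T)) :
    Module.finrank ℝ (vectorSpan ℝ F) < T.card := by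
  classical
  obtain ⟨n, hn⟩ : ∃ n, T.card = n + 1 := Nat.exists_eq_add_one.2 <| Finset.card_pos.2 <| by
    obtain ⟨_, i, hi, -⟩ := convexHull_nonempty_iff.1 (hFne.mono hFT)
    exact ⟨i, hi⟩
  have h₁ := Submodule.finrank_mono ((vectorSpan_mono ℝ hFT).trans (vectorSpan_convexHull _).le)
  have h₂ := finrank_vectorSpan_image_finset_le ℝ p T hn
  rw [Finset.coe_image] at h₂
  omega

theorem mem_convexHull_image_of_apply_eq_max (l : E →ₗ[ℝ] ℝ) {M : ℝ} (hM : ∀ i, l (p i) ≤ M)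
    {x : E} (hx : x ∈ convexHull ℝ (Set.range p)) (hlx : l x = M) :
    x ∈ convexHull ℝ (p '' {i | l (p i) = M}) := by
  classical
  rw [← Set.image_univ] at hx
  obtain ⟨w, hw0, -, hw1, rfl⟩ := exists_weights_of_mem_convexHull_image p _ hx
  have hgap : ∑ i, w i * (M - l (p i)) = 0 := by
    simp [mul_sub, Finset.sum_sub_distrib, ← Finset.sum_mul, hw1, ← hlx, map_sum]
  have hsupp : ∀ i, w i ≠ 0 → l (p i) = M := fun i hi => by
    have := (Finset.sum_eq_zero_iff_of_nonneg fun i _ =>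
      mul_nonneg (hw0 i) (sub_nonneg.2 (hM i))).1 hgap i (Finset.mem_univ i)
    rcases mul_eq_zero.1 this with h | h
    · exact absurd h hi
    · linarith
  rw [← Finset.sum_filter_of_ne fun i _ h => hsupp i (left_ne_zero_of_smul h)]
  exact (convex_convexHull ℝ _).sum_mem (fun i _ => hw0 i)
    (by rwa [Finset.sum_filter_of_ne fun i _ => hsupp i])
    fun i hi => subset_convexHull ℝ _ ⟨i, (Finset.mem_filter.1 hi).2, rfl⟩

theorem exists_functional_of_isExposed [TopologicalSpace E] (hp : AffineIndependent ℝ p)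
    {F : Set E} (hF : IsExposed ℝ (convexHull ℝ (Set.range p)) F) (hFne : F.Nonempty)
    (hdim : Module.finrank ℝ (vectorSpan ℝ F) + 2 = Fintype.card ι) :
    ∃ (l : E →L[ℝ] ℝ) (M : ℝ) (m : ι),
      (∀ v ∈ vectorSpan ℝ F, l v = 0) ∧ l (p m) < M ∧ ∀ i ≠ m, l (p i) = M := by
  classical
  obtain ⟨l, hl⟩ := hF hFne
  obtain ⟨x₀, hx₀⟩ := hFne
  rw [hl] at hx₀
  set M := l x₀
  have hM : ∀ i, l (p i) ≤ M := fun i => hx₀.2 _ (subset_convexHull ℝ _ ⟨i, rfl⟩)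
  have hlF : ∀ x ∈ F, l x = M := by
    rw [hl]
    exact fun x hx => le_antisymm (hx₀.2 x hx.1) (hx.2 x₀ hx₀.1)
  set T := Finset.univ.filter fun i => l (p i) = M
  have hFT : F ⊆ convexHull ℝ (p '' T) := fun x hx => by
    simpa [T] using mem_convexHull_image_of_apply_eq_max (l : E →ₗ[ℝ] ℝ) hM
      (hF.subset hx) (hlF x hx)
  have hT := finrank_vectorSpan_lt_card_of_subset_convexHull p T ⟨x₀, hl ▸ hx₀⟩ hFT
  obtain ⟨m, hm⟩ : ∃ m, l (p m) ≠ M := by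
    by_contra! hall
    have hP : convexHull ℝ (Set.range p) ⊆ {x | l x = M} :=
      convexHull_min (Set.range_subset_iff.2 hall) (convex_hyperplane l.isLinear M)
    have hFP : F = convexHull ℝ (Set.range p) := by
      rw [hl]
      exact Set.sep_eq_self_iff_mem_true.2 fun x hx y hy => ((hP hy).trans (hP hx).symm).le
    obtain ⟨n, hn⟩ := Nat.exists_eq_add_one.2 (show 0 < Fintype.card ι by omega)
    rw [hFP, vectorSpan_convexHull, hp.finrank_vectorSpan hn] at hdim
    omega
  refine ⟨l, M, m, fun v => apply_eq_zero_of_mem_vectorSpan (l : E →ₗ[ℝ] ℝ) hlF,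
    (hM m).lt_of_ne hm, fun i him => by_contra fun hi => ?_⟩
  have : T ⊆ (Finset.univ.erase m).erase i := fun k hk => by
    simp only [T, Finset.mem_filter] at hk
    simp only [Finset.mem_erase, Finset.mem_univ, and_true]
    exact ⟨by rintro rfl; exact hi hk.2, by rintro rfl; exact hm hk.2⟩
  have := Finset.card_le_card this
  rw [Finset.card_erase_of_mem (by simpa using him), Finset.card_erase_of_mem (by simp),
    Finset.card_univ] at this
  omega

theorem sum_smul_notMem_vectorSpan_of_isExposed [TopologicalSpace E] (hp : AffineIndependent ℝ p)
    {F : Set E} (hF : IsExposed ℝ (convexHull ℝ (Set.range p)) F) (hFne : F.Nonempty)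
    (hdim : Module.finrank ℝ (vectorSpan ℝ F) + 2 = Fintype.card ι) (hc : ∑ i, c i = 0)
    (hc0 : ∀ i, c i ≠ 0) : ∑ i, c i • p i ∉ vectorSpan ℝ F := by
  obtain ⟨l, M, m, hker, hlt, heq⟩ := exists_functional_of_isExposed hp hF hFne hdim
  intro hd
  have hld : l (∑ i, c i • p i) = c m * (l (p m) - M) := calc
    l (∑ i, c i • p i) = ∑ i, c i * (l (p i) - M) := by
      simp [map_sum, mul_sub, Finset.sum_sub_distrib, ← Finset.sum_mul, hc]
    _ = c m * (l (p m) - M) := Finset.sum_eq_single m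
      (fun i _ hi => by rw [heq i hi, sub_self, mul_zero]) (by simp)
  rw [hker _ hd] at hld
  exact mul_ne_zero (hc0 m) (sub_ne_zero.2 hlt.ne) hld.symm

theorem AffineIndependent.sum_smul_ne_zero (hp : AffineIndependent ℝ p) (hc : ∑ i, c i = 0)
    {j : ι} (hj : c j ≠ 0) : ∑ i, c i • p i ≠ 0 :=
  fun h => hj (hp.eq_zero_of_sum_eq_zero hc h j (Finset.mem_univ j))

variable {π : E →ₗ[ℝ] W}

theorem apply_notMem_convexHull_image_of_mul_pos (hp : AffineIndependent ℝ p)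
    (hc : ∑ i, c i = 0) (hker : LinearMap.ker π ≤ ℝ ∙ ∑ i, c i • p i) {i j : ι} (hij : i ≠ j)
    (hcij : 0 < c i * c j) : π (p j) ∉ convexHull ℝ ((π ∘ p) '' {k | k ≠ j}) := by
  classical
  rw [Set.image_comp, ← LinearMap.image_convexHull]
  rintro ⟨y, hy, hπy⟩
  obtain ⟨w, hw0, hwj, hw1, rfl⟩ := exists_weights_of_mem_convexHull_image p _ hy
  obtain ⟨t, ht⟩ := Submodule.mem_span_singleton.1
    (hker (show p j - ∑ k, w k • p k ∈ LinearMap.ker π by simp [hπy]))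
  have key := hp.eq_of_sum_eq_sum (s := Finset.univ) (w₁ := Pi.single j 1) (w₂ := w + t • c)
    (by simp [Finset.sum_add_distrib, ← Finset.mul_sum, hw1, hc])
    (by simp [add_smul, Finset.sum_add_distrib, mul_smul, ← Finset.smul_sum, ht])
  -- comparing weights at `j` and `i` gives `t * c j = 1` and `w i = -t * c i`, so `w i < 0`
  have hj := key j (Finset.mem_univ _)
  have hi := key i (Finset.mem_univ _)
  simp [hij, hwj j (by simp)] at hj hi
  have : w i * c j ^ 2 = -(c i * c j) := by linear_combination -(c j ^ 2) * hi + c i * c j * hj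
  nlinarith [mul_nonneg (hw0 i) (sq_nonneg (c j))]

theorem apply_mem_convexHull_image_of_mul_nonpos (hc : ∑ i, c i = 0)
    (hπ : π (∑ i, c i • p i) = 0) {j : ι} (hj : c j ≠ 0) (hsign : ∀ i ≠ j, c i * c j ≤ 0) :
    π (p j) ∈ convexHull ℝ ((π ∘ p) '' {k | k ≠ j}) := by
  classical
  have hrest : ∑ i ∈ Finset.univ.erase j, c i = -c j := by
    rw [← Finset.add_sum_erase _ _ (Finset.mem_univ j)] at hc
    linarith
  have hrel : ∑ i ∈ Finset.univ.erase j, c i • π (p i) = -c j • π (p j) := by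
    rw [map_sum, ← Finset.add_sum_erase _ _ (Finset.mem_univ j)] at hπ
    simp only [map_smul] at hπ
    rw [neg_smul, eq_neg_iff_add_eq_zero, add_comm, hπ]
  have := (convex_convexHull ℝ ((π ∘ p) '' {k | k ≠ j})).sum_mem (t := Finset.univ.erase j)
    (w := fun i => -c i / c j) (z := fun i => π (p i))
    (fun i hi => by
      rw [show -c i / c j = -(c i * c j) / c j ^ 2 by field_simp]
      exact div_nonneg (by linarith [hsign i (Finset.ne_of_mem_erase hi)]) (sq_nonneg _))
    (by rw [← Finset.sum_div, Finset.sum_neg_distrib, hrest, neg_neg, div_self hj])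
    (fun i hi => subset_convexHull ℝ _ ⟨i, Finset.ne_of_mem_erase hi, rfl⟩)
  convert this using 1
  simp_rw [div_eq_inv_mul, mul_smul, ← Finset.smul_sum, neg_smul, Finset.sum_neg_distrib, hrel,
    neg_smul, neg_neg, inv_smul_smul₀ hj]

theorem ncard_extremePoints_convexHull_range_comp_eq_card (hp : AffineIndependent ℝ p)
    (hc : ∑ i, c i = 0) (hker : LinearMap.ker π ≤ ℝ ∙ ∑ i, c i • p i)
    (hsign : ∀ j, ∃ i ≠ j, 0 < c i * c j) :
    ((convexHull ℝ (Set.range (π ∘ p))).extremePoints ℝ).ncard = Fintype.card ι := by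
  refine ncard_extremePoints_convexHull_range _ Finset.univ (fun j _ => ?_) ?_
  · obtain ⟨i, hij, hcij⟩ := hsign j
    exact apply_notMem_convexHull_image_of_mul_pos hp hc hker hij hcij
  · rw [Finset.coe_univ, Set.image_univ]
    exact subset_convexHull ℝ _

theorem ncard_extremePoints_convexHull_range_comp_eq_card_sub_one (hp : AffineIndependent ℝ p)
    (hc : ∑ i, c i = 0) (hker : LinearMap.ker π = ℝ ∙ ∑ i, c i • p i) {j : ι}
    (hvis : ∀ k ≠ j, ∃ i ≠ k, 0 < c i * c k) (hj : c j ≠ 0) (hsign : ∀ i ≠ j, c i * c j ≤ 0) :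
    ((convexHull ℝ (Set.range (π ∘ p))).extremePoints ℝ).ncard = Fintype.card ι - 1 := by
  classical
  have hG : ((Finset.univ.erase j : Finset ι) : Set ι) = {k | k ≠ j} := by ext; simp
  rw [← Finset.card_univ, ← Finset.card_erase_of_mem (Finset.mem_univ j)]
  refine ncard_extremePoints_convexHull_range _ _ (fun k hk => ?_) ?_
  · obtain ⟨i, hik, hcik⟩ := hvis k (Finset.ne_of_mem_erase hk)
    exact apply_notMem_convexHull_image_of_mul_pos hp hc hker.le hik hcik
  · rintro _ ⟨k, rfl⟩
    rw [hG]
    by_cases hk : k = j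
    · subst hk
      exact apply_mem_convexHull_image_of_mul_nonpos hc
        (LinearMap.mem_ker.1 (hker.ge (Submodule.mem_span_singleton_self _))) hj hsign
    · exact subset_convexHull ℝ _ ⟨k, hk, rfl⟩

end Simplex

theorem ker_orthogonalProjectionOnto_orthogonal_span_singleton {E : Type*}
    [NormedAddCommGroup E] [InnerProductSpace ℝ E] (d : E) :
    LinearMap.ker ((ℝ ∙ d)ᗮ.orthogonalProjectionOnto : E →ₗ[ℝ] (ℝ ∙ d)ᗮ) = ℝ ∙ d :=
  Submodule.ker_orthogonalProjectionOnto.trans (Submodule.orthogonal_orthogonal _)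

theorem shadow_convexHull_range {ι : Type*} (p : ι → EuclideanSpace ℝ (Fin 3))
    (d : EuclideanSpace ℝ (Fin 3)) :
    shadow (convexHull ℝ (Set.range p)) d = convexHull ℝ (Set.range
      (((ℝ ∙ d)ᗮ.orthogonalProjectionOnto : EuclideanSpace ℝ (Fin 3) →ₗ[ℝ] (ℝ ∙ d)ᗮ) ∘ p)) := by
  rw [shadow, Set.range_comp, ← LinearMap.image_convexHull]
  rfl

theorem sum_smul_notMem_vectorSpan_of_isFaceOf {p : Fin 4 → EuclideanSpace ℝ (Fin 3)}
    (hp : AffineIndependent ℝ p) {c : Fin 4 → ℝ} (hc : ∑ i, c i = 0) (hc0 : ∀ i, c i ≠ 0)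
    {F : Set (EuclideanSpace ℝ (Fin 3))} (hF : IsFaceOf (convexHull ℝ (Set.range p)) F) :
    ∑ i, c i • p i ∉ vectorSpan ℝ F := by
  have hFne : F.Nonempty := by
    rw [Set.nonempty_iff_ne_empty]
    rintro rfl
    have h := hF.2
    rw [vectorSpan_empty, finrank_bot] at h
    omega
  exact sum_smul_notMem_vectorSpan_of_isExposed hp hF.1 hFne (by simp [hF.2]) hc hc0

/-- A tetrahedron is not equiprojective: there are two directions, neither parallel
to any face, whose shadows are respectively a triangle and a quadrilateral. -/
theorem stmt_9 (p : Fin 4 → EuclideanSpace ℝ (Fin 3))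
    (hind : AffineIndependent ℝ p)
    (P : Set (EuclideanSpace ℝ (Fin 3)))
    (hP : P = convexHull ℝ (Set.range p)) :
    ∃ d₁ d₂ : EuclideanSpace ℝ (Fin 3), d₁ ≠ 0 ∧ d₂ ≠ 0 ∧
      (∀ F, IsFaceOf P F → d₁ ∉ vectorSpan ℝ F) ∧
      (∀ F, IsFaceOf P F → d₂ ∉ vectorSpan ℝ F) ∧
      IsKGon 3 (shadow P d₁) ∧ IsKGon 4 (shadow P d₂) := by
  subst hP
  set c₁ : Fin 4 → ℝ := ![1, 1, 1, -3]
  set c₂ : Fin 4 → ℝ := ![1, 1, -1, -1]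
  have hc₁ : ∑ i, c₁ i = 0 := by simp [c₁, Fin.sum_univ_four]; norm_num
  have hc₂ : ∑ i, c₂ i = 0 := by simp [c₂, Fin.sum_univ_four]
  have hc₁0 : ∀ i, c₁ i ≠ 0 := by intro i; fin_cases i <;> simp [c₁]
  have hc₂0 : ∀ i, c₂ i ≠ 0 := by intro i; fin_cases i <;> simp [c₂]
  refine ⟨∑ i, c₁ i • p i, ∑ i, c₂ i • p i, hind.sum_smul_ne_zero hc₁ (hc₁0 0),
    hind.sum_smul_ne_zero hc₂ (hc₂0 0),
    fun F hF => sum_smul_notMem_vectorSpan_of_isFaceOf hind hc₁ hc₁0 hF,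
    fun F hF => sum_smul_notMem_vectorSpan_of_isFaceOf hind hc₂ hc₂0 hF, ?_, ?_⟩
  · rw [IsKGon, shadow_convexHull_range]
    refine ncard_extremePoints_convexHull_range_comp_eq_card_sub_one hind hc₁
      (ker_orthogonalProjectionOnto_orthogonal_span_singleton _) (j := 3) ?_ (hc₁0 3) ?_
    · intro k hk
      fin_cases k
      exacts [⟨1, by decide, by simp [c₁]⟩, ⟨0, by decide, by simp [c₁]⟩,
        ⟨0, by decide, by simp [c₁]⟩, absurd rfl hk]
    · intro i hi
      fin_cases i <;> simp [c₁] at hi ⊢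
  · rw [IsKGon, shadow_convexHull_range]
    refine ncard_extremePoints_convexHull_range_comp_eq_card hind hc₂
      (ker_orthogonalProjectionOnto_orthogonal_span_singleton _).le ?_
    intro j
    fin_cases j
    exacts [⟨1, by decide, by simp [c₂]⟩, ⟨0, by decide, by simp [c₂]⟩,
      ⟨3, by decide, by simp [c₂]⟩, ⟨2, by decide, by simp [c₂]⟩]
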